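/- Let V be a 6-dimensional complex vector space and let ω₁, ω₂ ∈ O₅ be linearly independent with every nonzero combination λω₁ + μω₂ in O₅. (a) If the kernel lines α_{ω₁} and α_{ω₂} coincide, then α_{λω₁+μω₂} = α_{ω₁} for all (λ,μ) ≠ (0,0). (b) If ω₁ = α₁∧(α₂∧w₁ + v∧v₁) and ω₂ = α₂∧(α₁∧w₂ + v∧v₂) with α₁, α₂, v, v₁, v₂ linearly independent and span(v,v₁,v₂) = span(v,v₁,w₁) = span(v,v₂,w₂), then the associated hyperplane satisfies A_{λω₁+μω₂} = span(α₁, α₂, v, v₁, v₂) for all (λ,μ) ≠ (0,0). -/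

import Mathlib

/-!
(a) Let `α` span the common kernel line of `ω₁` and `ω₂`, so `α ∧ ω = 0` for every
`ω = λω₁ + μω₂`. If also `v ∧ ω = 0` with `v ∉ ⟨α⟩`, contracting twice with functionals dual to
`(α, v)` writes `ω = α ∧ v ∧ c`, contradicting `ω ∈ O₅`.

(b) Write `w₁ = a v + b v₁ + c v₂` and `w₂ = p v + q v₁ + r v₂`; the span conditions say exactly
`c ≠ 0` and `q ≠ 0`. Pairing the bivector `f ⌟ ω` with the dual basis of
`(α₁, α₂, v, v₁, v₂)` gives linear equations in the values of `f` on these five vectors which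
force them all to vanish whenever `(λ, μ) ≠ 0`. So `ker f` contains a 5-dimensional subspace of
the 6-dimensional `V`, and being a hyperplane it equals it.
-/

open ExteriorAlgebra

/-- Membership in the Segre orbit `O₅`. -/
def InO5 {V : Type*} [AddCommGroup V] [Module ℂ V] (ω : ExteriorAlgebra ℂ V) : Prop :=
  ω ∈ ⋀[ℂ]^3 V ∧ (¬ ∃ a b c : V, ω = ι ℂ a * ι ℂ b * ι ℂ c) ∧
    ∃ v : V, v ≠ 0 ∧ ι ℂ v * ω = 0

open CliffordAlgebra (contractLeft contractLeft_ι_mul contractLeft_ι)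

section CommRing

variable {R M : Type*} [CommRing R] [AddCommGroup M] [Module R M]

theorem contractLeft_mem_exteriorPower {d : Module.Dual R M} :
    ∀ {n : ℕ} {x : ExteriorAlgebra R M}, x ∈ ⋀[R]^(n + 1) M → contractLeft d x ∈ ⋀[R]^n M
  | 0, x, hx => by
    obtain ⟨v, rfl⟩ : x ∈ LinearMap.range (ι R) := by simpa using hx
    rw [contractLeft_ι]
    exact ⟨d v, by simp [Algebra.algebraMap_eq_smul_one]⟩
  | n + 1, x, hx => by
    rw [exteriorPower, pow_succ'] at hx
    induction hx using Submodule.mul_induction_on' with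
    | mem_mul_mem _ hm y hy =>
      obtain ⟨w, rfl⟩ := hm
      rw [contractLeft_ι_mul]
      refine sub_mem (Submodule.smul_mem _ _ hy) ?_
      rw [exteriorPower, pow_succ']
      exact Submodule.mul_mem_mul ⟨w, rfl⟩ (contractLeft_mem_exteriorPower hy)
    | add x _ y _ hx hy => simpa using add_mem hx hy

theorem eq_ι_mul_contractLeft_of_ι_mul_eq_zero {a : M} {d : Module.Dual R M} (hda : d a = 1)
    {x : ExteriorAlgebra R M} (hx : ι R a * x = 0) : x = ι R a * contractLeft d x := by
  have := congrArg (contractLeft d) hx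
  rwa [contractLeft_ι_mul, hda, one_smul, map_zero, sub_eq_zero] at this

theorem eq_ι_mul_ι_mul_contractLeft_contractLeft {a b : M} {d₀ d₁ : Module.Dual R M}
    (hd₀a : d₀ a = 1) (hd₁a : d₁ a = 0) (hd₁b : d₁ b = 1) {x : ExteriorAlgebra R M}
    (ha : ι R a * x = 0) (hb : ι R b * x = 0) :
    x = ι R a * ι R b * contractLeft d₁ (contractLeft d₀ x) := by
  set y := contractLeft d₀ x
  have hxy : x = ι R a * y := eq_ι_mul_contractLeft_of_ι_mul_eq_zero hd₀a ha
  rw [hxy] at hb ⊢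
  rw [eq_ι_mul_contractLeft_of_ι_mul_eq_zero hd₁b hb, contractLeft_ι_mul, hd₁a, zero_smul,
    zero_sub, mul_neg, ← mul_assoc, ← neg_mul, neg_eq_of_add_eq_zero_left (ι_add_mul_swap a b)]

def bivectorCoeff (g h : Module.Dual R M) : ExteriorAlgebra R M →ₗ[R] R :=
  (algebraMapInv : ExteriorAlgebra R M →ₐ[R] R).toLinearMap ∘ₗ contractLeft h ∘ₗ contractLeft g

theorem bivectorCoeff_ι_mul_ι (g h : Module.Dual R M) (x y : M) :
    bivectorCoeff g h (ι R x * ι R y) = g x * h y - g y * h x := by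
  simp only [bivectorCoeff, LinearMap.coe_comp, AlgHom.coe_toLinearMap, Function.comp_apply,
    contractLeft_ι_mul, contractLeft_ι, map_sub, map_smul, CliffordAlgebra.contractLeft_algebraMap,
    mul_zero, sub_zero, AlgHom.commutes, Algebra.algebraMap_self, RingHom.id_apply, smul_eq_mul,
    sub_right_inj]
  ring

end CommRing

section Field

variable {𝕜 V : Type*} [Field 𝕜] [AddCommGroup V] [Module 𝕜 V]

theorem LinearIndependent.exists_dual_apply_eq_ite {ι : Type*} [DecidableEq ι] {e : ι → V}
    (he : LinearIndependent 𝕜 e) :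
    ∃ g : ι → Module.Dual 𝕜 V, ∀ i j, g i (e j) = if i = j then 1 else 0 := by
  have hs := (linearIndepOn_id_range_iff he.injective).mpr he
  let b := Module.Basis.extend hs
  have hb : ∀ i, b ⟨e i, hs.subset_extend _ ⟨i, rfl⟩⟩ = e i := fun i =>
    Module.Basis.extend_apply_self hs _
  refine ⟨fun i => b.coord ⟨e i, hs.subset_extend _ ⟨i, rfl⟩⟩, fun i j => ?_⟩
  classical
  rw [← hb j, Module.Basis.coord_apply, Module.Basis.repr_self, Finsupp.single_apply]
  simp [he.injective.eq_iff, eq_comm]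

theorem exists_eq_ι_mul_ι_mul_of_ι_mul_eq_zero {a b : V} (hab : LinearIndependent 𝕜 ![a, b])
    {n : ℕ} {x : ExteriorAlgebra 𝕜 V} (hx : x ∈ ⋀[𝕜]^(n + 2) V)
    (ha : ι 𝕜 a * x = 0) (hb : ι 𝕜 b * x = 0) : ∃ y ∈ ⋀[𝕜]^n V, x = ι 𝕜 a * ι 𝕜 b * y := by
  obtain ⟨d, hd⟩ := hab.exists_dual_apply_eq_ite
  refine ⟨contractLeft (d 1) (contractLeft (d 0) x),
    contractLeft_mem_exteriorPower (contractLeft_mem_exteriorPower hx),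
    eq_ι_mul_ι_mul_contractLeft_contractLeft ?_ ?_ ?_ ha hb⟩
  · simpa using hd 0 0
  · simpa using hd 1 0
  · simpa using hd 1 1

theorem ι_mul_eq_zero_iff_mem_span_singleton {a : V} (ha₀ : a ≠ 0) {ω : ExteriorAlgebra 𝕜 V}
    (hω : ω ∈ ⋀[𝕜]^3 V) (hdec : ¬ ∃ x y z : V, ω = ι 𝕜 x * ι 𝕜 y * ι 𝕜 z)
    (ha : ι 𝕜 a * ω = 0) (v : V) : ι 𝕜 v * ω = 0 ↔ v ∈ Submodule.span 𝕜 {a} := by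
  refine ⟨fun hv => ?_, fun hv => ?_⟩
  · by_contra hva
    have hav : LinearIndependent 𝕜 ![a, v] := by
      rw [LinearIndependent.pair_iff' ha₀]
      rintro t rfl
      exact hva (Submodule.smul_mem _ t (Submodule.mem_span_singleton_self a))
    obtain ⟨y, hy, rfl⟩ := exists_eq_ι_mul_ι_mul_of_ι_mul_eq_zero hav (n := 1) hω ha hv
    obtain ⟨c, rfl⟩ : y ∈ LinearMap.range (ι 𝕜) := by simpa using hy
    exact hdec ⟨a, v, c, rfl⟩
  · obtain ⟨t, rfl⟩ := Submodule.mem_span_singleton.mp hv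
    rw [map_smul, smul_mul_assoc, ha, smul_zero]

theorem LinearIndependent.notMem_span_pair {n : ℕ} {e : Fin n → V} (he : LinearIndependent 𝕜 e)
    {i j k : Fin n} (hki : k ≠ i) (hkj : k ≠ j) : e k ∉ Submodule.span 𝕜 {e i, e j} := by
  simpa [Set.image_pair] using he.notMem_span_image (s := {i, j}) (by simp [hki, hkj])

theorem exists_eq_add_smul_of_span_eq {x y z w : V}
    (h : Submodule.span 𝕜 {x, y, z} = Submodule.span 𝕜 {x, y, w})
    (hz : z ∉ Submodule.span 𝕜 {x, y}) : ∃ a b c : 𝕜, c ≠ 0 ∧ w = a • x + b • y + c • z := by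
  have hw : w ∈ Submodule.span 𝕜 {x, y, z} := h ▸ Submodule.subset_span (by simp)
  obtain ⟨a, b, c, rfl⟩ := Submodule.mem_span_triple.mp hw
  refine ⟨a, b, c, fun hc => hz ?_, rfl⟩
  have : z ∈ Submodule.span 𝕜 {x, y, a • x + b • y + c • z} := h ▸ Submodule.subset_span (by simp)
  refine Submodule.span_le.mpr ?_ this
  rw [hc, zero_smul, add_zero]
  rintro _ (rfl | rfl | rfl)
  · exact Submodule.subset_span (by simp)
  · exact Submodule.subset_span (by simp)
  · exact Submodule.mem_span_pair.mpr ⟨a, b, rfl⟩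

theorem Module.Dual.ker_eq_span_of_apply_eq_zero [FiniteDimensional 𝕜 V] {n : ℕ}
    (hV : Module.finrank 𝕜 V = n + 1) {e : Fin n → V} (he : LinearIndependent 𝕜 e)
    {f : Module.Dual 𝕜 V} (hf : f ≠ 0) (hfe : ∀ i, f (e i) = 0) :
    LinearMap.ker f = Submodule.span 𝕜 (Set.range e) := by
  refine (Submodule.eq_of_le_of_finrank_eq ?_ ?_).symm
  · exact Submodule.span_le.mpr (Set.range_subset_iff.mpr hfe)
  · have := Module.Dual.finrank_ker_add_one_of_ne_zero hf
    rw [finrank_span_eq_card he, Fintype.card_fin]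
    omega

variable {f : Module.Dual 𝕜 V} {κ : ExteriorAlgebra 𝕜 V →ₗ[𝕜] ExteriorAlgebra 𝕜 V}

theorem apply_eq_zero_of_contraction_eq_zero
    (hκ : ∀ u v w : V, κ (ι 𝕜 u * ι 𝕜 v * ι 𝕜 w) =
      f u • (ι 𝕜 v * ι 𝕜 w) - f v • (ι 𝕜 u * ι 𝕜 w) + f w • (ι 𝕜 u * ι 𝕜 v))
    {e : Fin 5 → V} (he : LinearIndependent 𝕜 e) {w₁ w₂ : V} {a b c p q r : 𝕜}
    (hw₁ : w₁ = a • e 2 + b • e 3 + c • e 4) (hw₂ : w₂ = p • e 2 + q • e 3 + r • e 4)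
    (hc : c ≠ 0) (hq : q ≠ 0) {lam mu : 𝕜} (hlm : ¬(lam = 0 ∧ mu = 0))
    (h : κ (lam • (ι 𝕜 (e 0) * (ι 𝕜 (e 1) * ι 𝕜 w₁ + ι 𝕜 (e 2) * ι 𝕜 (e 3))) +
      mu • (ι 𝕜 (e 1) * (ι 𝕜 (e 0) * ι 𝕜 w₂ + ι 𝕜 (e 2) * ι 𝕜 (e 4)))) = 0) :
    ∀ i, f (e i) = 0 := by
  obtain ⟨g, hg⟩ := he.exists_dual_apply_eq_ite
  simp only [mul_add, smul_add, map_add, map_smul, ← mul_assoc, hκ] at h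
  have coeff := fun i j => congrArg (bivectorCoeff (g i) (g j)) h
  simp only [map_add, map_sub, map_smul, map_zero, bivectorCoeff_ι_mul_ι] at coeff
  simp only [hw₁, hw₂, map_add, map_smul, hg, smul_eq_mul] at coeff
  -- `hij` is the vanishing of the `e i ∧ e j`-coefficient, e.g. `h23 : λ f(e 0) = 0`,
  -- `h24 : μ f(e 1) = 0`, `h04 : -λ c f(e 1) + μ r f(e 1) = 0`.
  have h01 := coeff 0 1
  have h02 := coeff 0 2
  have h03 := coeff 0 3
  have h04 := coeff 0 4
  have h12 := coeff 1 2
  have h13 := coeff 1 3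
  have h14 := coeff 1 4
  have h23 := coeff 2 3
  have h24 := coeff 2 4
  simp only [Fin.reduceEq, if_true, if_false, mul_zero, mul_one, zero_mul, one_mul, sub_zero,
    zero_sub, add_zero, zero_add] at h01 h02 h03 h04 h12 h13 h14 h23 h24
  have hF : f (e 0) = 0 ∧ f (e 1) = 0 ∧ f (e 2) = 0 ∧ f (e 3) = 0 ∧ f (e 4) = 0 := by
    rcases eq_or_ne lam 0 with rfl | hlam
    · have hmu : mu ≠ 0 := by simpa using hlm
      have h1 : f (e 1) = 0 := by simpa [hmu] using h24
      have h0 : f (e 0) = 0 := by simpa [hmu, hq] using h13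
      have h4 : f (e 4) = 0 := by simpa [hmu, h0] using h12
      have h2 : f (e 2) = 0 := by simpa [hmu, h0] using h14
      have h3 : f (e 3) = 0 := by simpa [hmu, h2, h4, hq] using h01
      exact ⟨h0, h1, h2, h3, h4⟩
    have h0 : f (e 0) = 0 := by simpa [hlam] using h23
    rcases eq_or_ne mu 0 with rfl | hmu
    · have h1 : f (e 1) = 0 := by simpa [hlam, hc] using h04
      have h3 : f (e 3) = 0 := by simpa [hlam, h1] using h02
      have h2 : f (e 2) = 0 := by simpa [hlam, h1] using h03
      have h4 : f (e 4) = 0 := by simpa [hlam, h2, h3, hc] using h01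
      exact ⟨h0, h1, h2, h3, h4⟩
    · have h1 : f (e 1) = 0 := by simpa [hmu] using h24
      have h3 : f (e 3) = 0 := by simpa [hlam, h1] using h02
      have h2 : f (e 2) = 0 := by simpa [hlam, h1] using h03
      have h4 : f (e 4) = 0 := by simpa [hmu, h0] using h12
      exact ⟨h0, h1, h2, h3, h4⟩
  intro i
  fin_cases i <;> simp [hF]

theorem ker_eq_span_of_contraction_eq_zero [FiniteDimensional 𝕜 V]
    (hV : Module.finrank 𝕜 V = 6) (hf : f ≠ 0)
    (hκ : ∀ u v w : V, κ (ι 𝕜 u * ι 𝕜 v * ι 𝕜 w) =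
      f u • (ι 𝕜 v * ι 𝕜 w) - f v • (ι 𝕜 u * ι 𝕜 w) + f w • (ι 𝕜 u * ι 𝕜 v))
    {α₁ α₂ v w₁ w₂ v₁ v₂ : V} (hli : LinearIndependent 𝕜 ![α₁, α₂, v, v₁, v₂])
    (hsp₁ : Submodule.span 𝕜 {v, v₁, v₂} = Submodule.span 𝕜 {v, v₁, w₁})
    (hsp₂ : Submodule.span 𝕜 {v, v₁, v₂} = Submodule.span 𝕜 {v, v₂, w₂})
    {lam mu : 𝕜} (hlm : ¬(lam = 0 ∧ mu = 0))
    (h : κ (lam • (ι 𝕜 α₁ * (ι 𝕜 α₂ * ι 𝕜 w₁ + ι 𝕜 v * ι 𝕜 v₁)) +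
      mu • (ι 𝕜 α₂ * (ι 𝕜 α₁ * ι 𝕜 w₂ + ι 𝕜 v * ι 𝕜 v₂))) = 0) :
    LinearMap.ker f = Submodule.span 𝕜 {α₁, α₂, v, v₁, v₂} := by
  obtain ⟨a, b, c, hc, hw₁⟩ := exists_eq_add_smul_of_span_eq hsp₁
    (hli.notMem_span_pair (i := 2) (j := 3) (k := 4) (by decide) (by decide))
  obtain ⟨p, r, q, hq, hw₂⟩ := exists_eq_add_smul_of_span_eq (Set.pair_comm v₁ v₂ ▸ hsp₂)
    (hli.notMem_span_pair (i := 2) (j := 4) (k := 3) (by decide) (by decide))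
  rw [add_right_comm] at hw₂
  have hfe := apply_eq_zero_of_contraction_eq_zero hκ hli hw₁ hw₂ hc hq hlm h
  rw [Module.Dual.ker_eq_span_of_apply_eq_zero hV hli hf hfe]
  congr 1
  ext
  simp only [Matrix.range_cons, Matrix.range_empty, Set.union_empty, Set.union_singleton,
    Set.union_insert, Set.mem_insert_iff, Set.mem_singleton_iff]
  tauto

end Field

theorem stmt13 {V : Type*} [AddCommGroup V] [Module ℂ V] [FiniteDimensional ℂ V]
    (hV : Module.finrank ℂ V = 6)
    (K : Module.Dual ℂ V →ₗ[ℂ] ExteriorAlgebra ℂ V →ₗ[ℂ] ExteriorAlgebra ℂ V)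
    (hK : ∀ (f : Module.Dual ℂ V) (u v w : V),
      K f (ι ℂ u * ι ℂ v * ι ℂ w) =
        f u • (ι ℂ v * ι ℂ w) - f v • (ι ℂ u * ι ℂ w) + f w • (ι ℂ u * ι ℂ v))
    (ω₁ ω₂ : ExteriorAlgebra ℂ V)
    (hpencil : ∀ lam mu : ℂ, ¬ (lam = 0 ∧ mu = 0) → InO5 (lam • ω₁ + mu • ω₂)) :
    -- (a)
    ((∀ α₁ α₂ : V, α₁ ≠ 0 → α₂ ≠ 0 →
      (∀ v : V, ι ℂ v * ω₁ = 0 ↔ v ∈ Submodule.span ℂ {α₁}) →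
      (∀ v : V, ι ℂ v * ω₂ = 0 ↔ v ∈ Submodule.span ℂ {α₂}) →
      Submodule.span ℂ {α₁} = Submodule.span ℂ {α₂} →
      ∀ lam mu : ℂ, ¬ (lam = 0 ∧ mu = 0) →
        ∀ v : V, ι ℂ v * (lam • ω₁ + mu • ω₂) = 0 ↔ v ∈ Submodule.span ℂ {α₁}) ∧
    -- (b)
    (∀ α₁ α₂ v w₁ w₂ v₁ v₂ : V,
      LinearIndependent ℂ ![α₁, α₂, v, v₁, v₂] →
      Submodule.span ℂ {v, v₁, v₂} = Submodule.span ℂ {v, v₁, w₁} →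
      Submodule.span ℂ {v, v₁, v₂} = Submodule.span ℂ {v, v₂, w₂} →
      ω₁ = ι ℂ α₁ * (ι ℂ α₂ * ι ℂ w₁ + ι ℂ v * ι ℂ v₁) →
      ω₂ = ι ℂ α₂ * (ι ℂ α₁ * ι ℂ w₂ + ι ℂ v * ι ℂ v₂) →
      ∀ lam mu : ℂ, ¬ (lam = 0 ∧ mu = 0) →
        ∀ f : Module.Dual ℂ V, f ≠ 0 → K f (lam • ω₁ + mu • ω₂) = 0 →
          LinearMap.ker f = Submodule.span ℂ {α₁, α₂, v, v₁, v₂})) := by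
  refine ⟨?_, ?_⟩
  · rintro α₁ α₂ hα₁ - h₁ h₂ hspan lam mu hlm
    obtain ⟨hω, hdec, -⟩ := hpencil lam mu hlm
    refine ι_mul_eq_zero_iff_mem_span_singleton hα₁ hω hdec ?_
    have hα₂ : α₁ ∈ Submodule.span ℂ {α₂} := hspan ▸ Submodule.mem_span_singleton_self α₁
    rw [mul_add, mul_smul_comm, mul_smul_comm, (h₁ α₁).2 (Submodule.mem_span_singleton_self α₁),
      (h₂ α₁).2 hα₂, smul_zero, smul_zero, add_zero]
  · rintro α₁ α₂ v w₁ w₂ v₁ v₂ hli hsp₁ hsp₂ rfl rfl lam mu hlm f hf hKf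
    exact ker_eq_span_of_contraction_eq_zero hV hf (hK f) hli hsp₁ hsp₂ hlm hKf
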